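/- The word w(𝝀) of the d-fold dilated partition 𝝀 is obtained from the word w(λ) by replacing each 0 by d consecutive 0's and each 1 by d consecutive 1's; in particular w(𝝀) has length d(λ₁ + ℓ(λ)) and is constant on each consecutive block of d positions. -/

import Mathlib

/-- Murnaghan–Nakayama recursion on beta-sets: `MNchar S α` computes the character
value via successive rim-hook (border-strip) removals encoded by beta-numbers. -/
def MNchar : Finset ℕ → List ℕ → ℤ
  | S, [] => if S = Finset.range S.card then 1 else 0
  | S, k :: rest =>
      ∑ s ∈ S.filter (fun s => k ≤ s ∧ s - k ∉ S),
        (-1 : ℤ) ^ (S.filter (fun t => s - k < t ∧ t < s)).card *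
          MNchar (insert (s - k) (S.erase s)) rest

/-- Canonical beta-set of a partition (given as a multiset of parts). -/
def betaSet (P : Multiset ℕ) : Finset ℕ :=
  ((List.range (P.sort (· ≤ ·)).length).map
    (fun i => (P.sort (· ≤ ·)).getD i 0 + i)).toFinset

/-- Irreducible character of the symmetric group indexed by `lam`, at cycle type `mu`. -/
def chi (lam mu : Multiset ℕ) : ℤ := MNchar (betaSet lam) (mu.sort (· ≤ ·))

/-- d-fold dilation of a partition: each part p becomes d copies of d*p. -/
def dilate (d : ℕ) (P : Multiset ℕ) : Multiset ℕ :=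
  P.bind fun p => Multiset.replicate d (d * p)

/-- Scale every part of a partition by d. -/
def scale (d : ℕ) (P : Multiset ℕ) : Multiset ℕ := P.map (d * ·)

def IsPartitionOf (n : ℕ) (P : Multiset ℕ) : Prop := (∀ p ∈ P, 0 < p) ∧ P.sum = n

def zerosBefore (β : List Bool) (j : ℕ) : ℕ := (β.take j).count false

/-- Shape of a binary sequence: one part for each `true`, equal to the number of
`false`s to its left (zero parts discarded). -/
def shapeOf (β : List Bool) : Multiset ℕ :=
  ↑((List.range β.length).filterMap fun j =>
      if β.getD j false = true ∧ 0 < zerosBefore β j then some (zerosBefore β j) else none)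

/-- The word of a partition: the unique binary sequence starting with 0 and ending
with 1 whose shape is the partition. -/
def word (P : Multiset ℕ) : List Bool :=
  (List.range (P.sup + Multiset.card P)).map fun j => decide (j ∈ betaSet P)

/-- Cells of the Young diagram of a partition. -/
def cells (P : Multiset ℕ) : Finset (ℕ × ℕ) :=
  (Finset.range (Multiset.card P) ×ˢ Finset.range (P.sup + 1)).filter
    fun x => x.2 < ((P.sort (· ≤ ·)).reverse.getD x.1 0)

def CellAdj (x y : ℕ × ℕ) : Prop :=
  (x.1 = y.1 ∧ (x.2 = y.2 + 1 ∨ y.2 = x.2 + 1)) ∨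
  (x.2 = y.2 ∧ (x.1 = y.1 + 1 ∨ y.1 = x.1 + 1))

/-- A set of cells is a rim hook: nonempty, connected, no 2×2 square. -/
def IsRimHook (s : Finset (ℕ × ℕ)) : Prop :=
  s.Nonempty ∧
  (∀ x ∈ s, ∀ y ∈ s, Relation.ReflTransGen (fun u v => v ∈ s ∧ CellAdj u v) x y) ∧
  ∀ i j : ℕ, ¬((i, j) ∈ s ∧ (i + 1, j) ∈ s ∧ (i, j + 1) ∈ s ∧ (i + 1, j + 1) ∈ s)

/-- A cascade, encoded by its first row and the sequence of 0-1 swap positions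
`(aᵢ, bᵢ)` relating consecutive rows. -/
structure Cascade where
  top : List Bool
  swaps : List (ℕ × ℕ)

def applySwaps (r : List Bool) (s : List (ℕ × ℕ)) : List Bool :=
  s.foldl (fun r ab => (r.set ab.1 true).set ab.2 false) r

def cascadeRow (C : Cascade) (i : ℕ) : List Bool := applySwaps C.top (C.swaps.take i)

def cascadeBot (C : Cascade) : List Bool := applySwaps C.top C.swaps

/-- The defining conditions of a cascade. -/
def Cascade.Valid (C : Cascade) : Prop :=
  C.top.head? = some false ∧ C.top.getLast? = some true ∧
  (∀ i < C.swaps.length,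
    (C.swaps.getD i (0, 0)).1 < (C.swaps.getD i (0, 0)).2 ∧
    (C.swaps.getD i (0, 0)).2 < (cascadeRow C i).length ∧
    (cascadeRow C i).getD (C.swaps.getD i (0, 0)).1 true = false ∧
    (cascadeRow C i).getD (C.swaps.getD i (0, 0)).2 false = true) ∧
  ∃ u v, cascadeBot C = List.replicate u true ++ List.replicate v false

def cascadeShape (C : Cascade) : Multiset ℕ := shapeOf C.top

def cascadeContent (C : Cascade) : List ℕ := C.swaps.map fun ab => ab.2 - ab.1

/-- Crossings of a cascade: pairs (i,j) with row i having a 1 in position j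
strictly between the swapped positions aᵢ < j < bᵢ. -/
def cascadeCrossings (C : Cascade) : Finset (ℕ × ℕ) :=
  (Finset.range C.swaps.length ×ˢ Finset.range C.top.length).filter fun ij =>
    (cascadeRow C ij.1).getD ij.2 false = true ∧
    (C.swaps.getD ij.1 (0, 0)).1 < ij.2 ∧ ij.2 < (C.swaps.getD ij.1 (0, 0)).2

def cascadeWt (C : Cascade) : ℤ := (-1) ^ (cascadeCrossings C).card

def traceSwaps (s : List (ℕ × ℕ)) (p : ℕ) : ℕ :=
  s.foldl (fun p ab => if p = ab.1 then ab.2 else if p = ab.2 then ab.1 else p) p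

/-- The path starting in column x: its position after i swaps. -/
def cascadePath (C : Cascade) (x i : ℕ) : ℕ := traceSwaps (C.swaps.take i) x

def onesPositions (r : List Bool) : List ℕ :=
  (List.range r.length).filter fun j => r.getD j false

/-- The permutation π_C associated to a cascade, as a function on {0,…,k−1}. -/
def cascadePerm (C : Cascade) (j : ℕ) : ℕ :=
  (onesPositions (cascadeBot C)).idxOf
    (traceSwaps C.swaps ((onesPositions C.top).getD j 0))

/-- Sign of a function on {0,…,k−1} via inversion count. -/
def signOf (f : ℕ → ℕ) (k : ℕ) : ℤ :=
  (-1) ^ ((Finset.range k ×ˢ Finset.range k).filter fun p =>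
      p.1 < p.2 ∧ f p.2 < f p.1).card

/-- Crossings of the two paths starting in columns x and y. -/
def pathCrossings (C : Cascade) (x y : ℕ) : Finset (ℕ × ℕ) :=
  (Finset.range C.swaps.length ×ˢ Finset.range C.top.length).filter fun ij =>
    cascadePath C x ij.1 = ij.2 ∧ cascadePath C x ij.1 < cascadePath C y ij.1 ∧
    cascadePath C y (ij.1 + 1) < cascadePath C x (ij.1 + 1)

def rimRows (s : Finset (ℕ × ℕ)) : ℕ := (s.image Prod.fst).card

/-- A rim hook tableau, as the chain of successive shapes λ¹ ⊃ … ⊃ λ^{m+1} = ∅. -/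
def IsRHT (T : List (Multiset ℕ)) : Prop :=
  2 ≤ T.length ∧ (∀ P ∈ T, ∀ p ∈ P, 0 < p) ∧ T.getLast? = some 0 ∧
  ∀ i, i + 1 < T.length →
    cells (T.getD (i + 1) 0) ⊆ cells (T.getD i 0) ∧
    IsRimHook (cells (T.getD i 0) \ cells (T.getD (i + 1) 0))

def tabShape (T : List (Multiset ℕ)) : Multiset ℕ := T.headI

def tabContent (T : List (Multiset ℕ)) : List ℕ :=
  (List.range (T.length - 1)).map fun i =>
    (cells (T.getD i 0) \ cells (T.getD (i + 1) 0)).card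

def tabWt (T : List (Multiset ℕ)) : ℤ :=
  ∏ i ∈ Finset.range (T.length - 1),
    (-1 : ℤ) ^ (rimRows (cells (T.getD i 0) \ cells (T.getD (i + 1) 0)) - 1)

/-- Θ : cascades → rim hook tableaux, via the shapes of the successive rows. -/
def theta (C : Cascade) : List (Multiset ℕ) :=
  (List.range (C.swaps.length + 1)).map fun i => shapeOf (cascadeRow C i)

/-- The block column permutation: j = i + d·k with i < d goes to σ(i) + d·k. -/
def gammaMap (d : ℕ) (σ : Equiv.Perm (Fin d)) (j : ℕ) : ℕ :=
  if h : 0 < d then d * (j / d) + (σ ⟨j % d, Nat.mod_lt j h⟩ : ℕ) else j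

def permuteCols (d : ℕ) (σ : Equiv.Perm (Fin d)) (r : List Bool) : List Bool :=
  (List.range r.length).map fun j => r.getD (gammaMap d σ⁻¹ j) false

/-- The action of σ ∈ S_d on a cascade: permute columns within blocks of size d. -/
def actC (d : ℕ) (σ : Equiv.Perm (Fin d)) (C : Cascade) : Cascade :=
  ⟨permuteCols d σ C.top, C.swaps.map fun ab => (gammaMap d σ ab.1, gammaMap d σ ab.2)⟩

/-! Sorting `dilate d P` repeats each scaled part `d * λ_q` exactly `d` times, so the beta-number at
index `d * q + r` (with `r < d`) is `d * (λ_q + q) + r`. Hence the beta-set of the dilation is the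
union of the blocks `[d * b, d * b + d)` over the beta-numbers `b` of `P`; since `λ₁ + ℓ(λ)` also
scales by `d`, the word of the dilation is the word of `P` with every letter repeated `d` times. -/

namespace List

variable {α : Type*}

theorem length_flatMap_replicate (d : ℕ) (l : List α) :
    (l.flatMap fun a => replicate d a).length = d * l.length := by
  induction l with
  | nil => simp
  | cons a l ih => simp [ih, Nat.mul_succ, Nat.add_comm]

theorem getD_flatMap_replicate {d i : ℕ} (hi : i < d) (l : List α) (k : ℕ) (x : α) :
    (l.flatMap fun a => replicate d a).getD (d * k + i) x = l.getD k x := by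
  induction l generalizing k with
  | nil => simp
  | cons a l ih =>
    cases k with
    | zero =>
      rw [flatMap_cons, Nat.mul_zero, Nat.zero_add, getD_append _ _ _ _ (by simpa using hi)]
      simp [hi]
    | succ k =>
      rw [flatMap_cons, Nat.mul_succ, Nat.add_right_comm,
        getD_append_right _ _ _ _ (by simp), length_replicate, Nat.add_sub_cancel, ih]
      rfl

theorem Pairwise.flatMap_replicate {R : α → α → Prop} (hR : ∀ a, R a a) {l : List α}
    (hl : l.Pairwise R) (d : ℕ) : (l.flatMap fun a => replicate d a).Pairwise R := by
  refine pairwise_flatMap.2 ⟨fun a _ => pairwise_replicate.2 (.inr (hR a)), hl.imp ?_⟩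
  intro a b hab x hx y hy
  rwa [eq_of_mem_replicate hx, eq_of_mem_replicate hy]

theorem map_range_flatMap_replicate (d : ℕ) (f : ℕ → α) (N : ℕ) :
    ((range N).map f).flatMap (fun a => replicate d a) =
      (range (d * N)).map fun j => f (j / d) := by
  induction N with
  | zero => simp
  | succ N ih =>
    rw [range_succ, map_append, flatMap_append, ih, Nat.mul_succ, range_add, map_append, map_map]
    congr 1
    rw [map_singleton, flatMap_singleton, eq_comm, eq_replicate_iff, length_map, length_range]
    refine ⟨rfl, ?_⟩
    simp only [mem_map, mem_range, Function.comp_apply]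
    rintro _ ⟨i, hi, rfl⟩
    rw [Nat.mul_add_div (by omega), Nat.div_eq_of_lt hi, add_zero]

end List

theorem sort_dilate (d : ℕ) (P : Multiset ℕ) :
    (dilate d P).sort (· ≤ ·) =
      ((P.sort (· ≤ ·)).map (d * ·)).flatMap fun a => List.replicate d a := by
  refine List.Perm.eq_of_pairwise' (Multiset.pairwise_sort _ _)
    (((Multiset.pairwise_sort _ _).map _ fun _ _ h => Nat.mul_le_mul_left d h).flatMap_replicate
      le_refl d) ?_
  rw [← Multiset.coe_eq_coe, Multiset.sort_eq, dilate, ← Multiset.coe_bind, ← Multiset.map_coe,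
    Multiset.sort_eq]
  simp [Multiset.bind_map, Multiset.coe_replicate]

theorem card_dilate (d : ℕ) (P : Multiset ℕ) :
    Multiset.card (dilate d P) = d * Multiset.card P := by
  simp [dilate, Multiset.card_bind, mul_comm]

theorem sup_dilate (d : ℕ) (P : Multiset ℕ) : (dilate d P).sup = d * P.sup := by
  induction P using Multiset.induction with
  | empty => simp [dilate]
  | cons a P ih =>
    have hrep : (Multiset.replicate d (d * a)).sup = d * a := by
      rcases d with _ | d
      · simp
      · rw [Multiset.replicate_succ, Multiset.sup_cons, sup_eq_left]
        exact Multiset.sup_le.2 fun b hb => (Multiset.eq_of_mem_replicate hb).le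
    rw [dilate, Multiset.cons_bind, Multiset.sup_add, ← dilate, ih, hrep, Multiset.sup_cons]
    exact Nat.mul_max_mul_left d a P.sup

theorem mem_betaSet_iff {P : Multiset ℕ} {j : ℕ} :
    j ∈ betaSet P ↔ ∃ i < (P.sort (· ≤ ·)).length, (P.sort (· ≤ ·)).getD i 0 + i = j := by
  simp [betaSet]

theorem mem_betaSet_dilate {d : ℕ} (hd : 0 < d) (P : Multiset ℕ) (j : ℕ) :
    j ∈ betaSet (dilate d P) ↔ j / d ∈ betaSet P := by
  set L := P.sort (· ≤ ·)
  have hlen : ((dilate d P).sort (· ≤ ·)).length = d * L.length := by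
    rw [sort_dilate, List.length_flatMap_replicate, List.length_map]
  have hget (i : ℕ) : ((dilate d P).sort (· ≤ ·)).getD i 0 + i =
      d * (L.getD (i / d) 0 + i / d) + i % d := by
    conv_lhs => rw [sort_dilate, ← Nat.div_add_mod i d,
      List.getD_flatMap_replicate (Nat.mod_lt _ hd)]
    rw [show (L.map (d * ·)).getD (i / d) 0 = d * L.getD (i / d) 0 from List.getD_map L 0 _]
    ring
  simp only [mem_betaSet_iff, hlen, hget]
  constructor
  · rintro ⟨i, hi, rfl⟩
    refine ⟨i / d, Nat.div_lt_of_lt_mul hi, ?_⟩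
    rw [Nat.mul_add_div hd, Nat.div_eq_of_lt (Nat.mod_lt _ hd), add_zero]
  · rintro ⟨q, hq, hj⟩
    refine ⟨d * q + j % d, ?_, ?_⟩
    · calc d * q + j % d < d * q + d := by have := Nat.mod_lt j hd; omega
        _ = d * (q + 1) := by ring
        _ ≤ d * L.length := Nat.mul_le_mul_left d hq
    · rw [Nat.mul_add_div hd, Nat.div_eq_of_lt (Nat.mod_lt _ hd), add_zero, Nat.mul_add_mod,
        Nat.mod_mod, hj, Nat.div_add_mod]

theorem word_dilate_general (d : ℕ)
    (P : Multiset ℕ) :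
    word (dilate d P) = (word P).flatMap (fun b => List.replicate d b) ∧
    (word (dilate d P)).length = d * (P.sup + Multiset.card P) ∧
    ∀ k i j, i < d → j < d →
      (word (dilate d P)).getD (d * k + i) false =
        (word (dilate d P)).getD (d * k + j) false := by
  obtain rfl | hd := Nat.eq_zero_or_pos d
  · simp [dilate, word]
  have hword : word (dilate d P) = (word P).flatMap (fun b => List.replicate d b) := by
    rw [word, sup_dilate, card_dilate, ← mul_add, word, List.map_range_flatMap_replicate]
    simp only [mem_betaSet_dilate hd]
  refine ⟨hword, ?_, fun k i j hi hj => ?_⟩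
  · rw [hword, List.length_flatMap_replicate, word, List.length_map, List.length_range]
  · rw [hword, List.getD_flatMap_replicate hi, List.getD_flatMap_replicate hj]

/-- The word of the d-fold dilated partition 𝝀 is obtained from w(λ) by replacing each
letter by d consecutive copies; in particular it has length d(λ₁ + ℓ(λ)) and is
constant on each consecutive block of d positions. -/
theorem word_dilate (d n : ℕ) (hd : 0 < d) (hn : 0 < n)
    (P : Multiset ℕ) (hP : IsPartitionOf n P) :
    word (dilate d P) = (word P).flatMap (fun b => List.replicate d b) ∧
    (word (dilate d P)).length = d * (P.sup + Multiset.card P) ∧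
    ∀ k i j, i < d → j < d →
      (word (dilate d P)).getD (d * k + i) false =
        (word (dilate d P)).getD (d * k + j) false :=
  word_dilate_general d P
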